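/- Let R₀ := φ(A) with A = [[T, 0], [1−T², T]] and T = exp(ht), in A₂(ℂ(t))[[h]], and let P be the algebra automorphism of A₂(ℂ(t))[[h]] interchanging (x₁, p₁) ↔ (x₂, p₂). Then P(R₀·x₁·R₀^{−1}) = x₁ − T²x₁ + T x₂ and P(R₀·x₂·R₀^{−1}) = T x₁; equivalently, R₀·x₁·R₀^{−1} = T x₁ + (1 − T²) x₂ and R₀·x₂·R₀^{−1} = T x₂. -/

import Mathlib

open PowerSeries

noncomputable section

/-- Exponential of a formal power series with coefficients in a (possibly noncommutative)
ℚ-algebra; intended for series with zero constant term. -/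
def psExp {B : Type*} [Ring B] [Algebra ℚ B] (a : PowerSeries B) : PowerSeries B :=
  PowerSeries.mk fun m =>
    ∑ r ∈ Finset.range (m + 1), (r.factorial : ℚ)⁻¹ • (PowerSeries.coeff m (a ^ r))

/-- Coefficientwise extension of a map `R → S` to formal power series. -/
def liftFun {R S : Type*} [Semiring R] [Semiring S] (f : R → S) (g : PowerSeries R) :
    PowerSeries S :=
  PowerSeries.mk fun m => f (PowerSeries.coeff m g)

/-- The normal-ordering property of a map `N : k[x_1,…,x_n,p_1,…,p_n] → A_n(k)`. -/
def IsNormalOrdering {k : Type*} [Field k] {n : ℕ} {B : Type*} [Ring B] [Algebra k B]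
    (x p : Fin n → B) (N : MvPolynomial (Fin n ⊕ Fin n) k →ₗ[k] B) : Prop :=
  ∀ d : (Fin n ⊕ Fin n) →₀ ℕ,
    N (MvPolynomial.monomial d 1) =
      ((List.finRange n).map fun i => x i ^ d (Sum.inl i)).prod *
        ((List.finRange n).map fun i => p i ^ d (Sum.inr i)).prod

/-- `φ(A) := N(exp(Σ_{i,j} x_i (A − 𝟙)_{ij} p_j))`. -/
def phiMat {k : Type*} [Field k] [CharZero k] {n : ℕ} {B : Type*} [Ring B] [Algebra k B]
    (N : MvPolynomial (Fin n ⊕ Fin n) k →ₗ[k] B)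
    (A : Matrix (Fin n) (Fin n) (PowerSeries k)) : PowerSeries B :=
  liftFun N (psExp (∑ i : Fin n, ∑ j : Fin n,
    PowerSeries.C
        (MvPolynomial.X (Sum.inl i) * MvPolynomial.X (Sum.inr j) : MvPolynomial (Fin n ⊕ Fin n) k) *
      PowerSeries.map (MvPolynomial.C) ((A - 1) i j)))

instance : CharZero (RatFunc ℂ) :=
  charZero_of_injective_algebraMap (algebraMap ℚ (RatFunc ℂ)).injective

/-- `T := exp(h·t) ∈ ℂ(t)[[h]]`, where `t` is the rational-function variable and `h` the
power-series variable. -/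
def Tser : PowerSeries (RatFunc ℂ) :=
  psExp ((PowerSeries.X : PowerSeries (RatFunc ℂ)) * PowerSeries.C (RatFunc.X : RatFunc ℂ))

/-- The matrix `A = [[T, 0], [1 − T², T]]` over `ℂ(t)[[h]]`. -/
def matT : Matrix (Fin 2) (Fin 2) (PowerSeries (RatFunc ℂ)) :=
  !![Tser, 0; 1 - Tser ^ 2, Tser]

/-!
Write `R₀ = N(exp S)` with `S = Σ x_i (A - 1)_{ij} p_j`. Moving `x_j` through a normally
ordered monomial from the right produces its `p_j`-derivative,
`N(f) x_j = N(x_j f + ∂_{p_j} f)`. Since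
`∂_{p_j} exp S = (∂_{p_j} S) exp S = (Σ_i x_i (A - 1)_{ij}) exp S`,
this gives `R₀ x_j = (Σ_i A_{ij} x_i) R₀` for every `A ≡ 1 (mod h)`; `R₀` is invertible because
its constant term is `N(1) = 1`. For `A = [[T, 0], [1 - T², T]]` this is the claimed
conjugation, and `P` only swaps the indices.
-/

namespace Derivation

variable {R A : Type*} [CommSemiring R] [CommRing A] [Algebra R A]

def powerSeriesMapCoeffs (d : Derivation R A A) : Derivation R A⟦X⟧ A⟦X⟧ :=
  Derivation.mk'
    { toFun := fun f => PowerSeries.mk fun m => d (coeff m f)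
      map_add' := fun f g => by ext m; simp
      map_smul' := fun r f => by ext m; simp }
    fun f g => by
      ext m
      simp only [LinearMap.coe_mk, AddHom.coe_mk, smul_eq_mul, mul_comm g, map_add, coeff_mul,
        coeff_mk, map_sum, d.leibniz, ← Finset.sum_add_distrib]
      exact Finset.sum_congr rfl fun _ _ => by ring

@[simp]
lemma coeff_powerSeriesMapCoeffs (d : Derivation R A A) (f : A⟦X⟧) (m : ℕ) :
    coeff m (d.powerSeriesMapCoeffs f) = d (coeff m f) := by
  simp [powerSeriesMapCoeffs]

end Derivation

lemma constantCoeff_psExp {B : Type*} [Ring B] [Algebra ℚ B] (f : B⟦X⟧) :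
    constantCoeff (psExp f) = 1 := by
  rw [← coeff_zero_eq_constantCoeff_apply, psExp, coeff_mk]
  simp

def expPartialSum {S : Type*} [Semiring S] [Algebra ℚ S] (M : ℕ) (f : S) : S :=
  ∑ r ∈ Finset.range M, (r.factorial : ℚ)⁻¹ • f ^ r

lemma Derivation.map_expPartialSum_succ {R S : Type*} [CommSemiring R] [CommRing S] [Algebra R S]
    [Algebra ℚ S] (D : Derivation R S S) (f : S) (M : ℕ) :
    D (expPartialSum (M + 1) f) = D f * expPartialSum M f := by
  have factorial_smul (r : ℕ) (y : S) :
      ((r + 1).factorial : ℚ)⁻¹ • ((r + 1) • y) = (r.factorial : ℚ)⁻¹ • y := by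
    rw [← Nat.cast_smul_eq_nsmul ℚ, smul_smul, Nat.factorial_succ]
    congr 1
    push_cast
    field_simp
  rw [expPartialSum, expPartialSum, Finset.sum_range_succ', map_add, pow_zero, map_rat_smul,
    D.map_one_eq_zero, smul_zero, add_zero, map_sum, Finset.mul_sum]
  refine Finset.sum_congr rfl fun r _ => ?_
  rw [map_rat_smul, D.leibniz_pow, Nat.add_sub_cancel, factorial_smul, smul_eq_mul,
    mul_comm (f ^ r), mul_smul_comm]

lemma PowerSeries.coeff_pow_eq_zero_of_lt {B : Type*} [Ring B] {f : B⟦X⟧}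
    (hf : constantCoeff f = 0) {m r : ℕ} (h : m < r) : coeff m (f ^ r) = 0 :=
  coeff_of_lt_order _ <| (Nat.cast_lt.2 h).trans_le (le_order_pow_of_constantCoeff_eq_zero r hf)

lemma coeff_psExp_eq_coeff_expPartialSum {B : Type*} [Ring B] [Algebra ℚ B] {f : B⟦X⟧}
    (hf : constantCoeff f = 0) {m M : ℕ} (hm : m < M) :
    coeff m (psExp f) = coeff m (expPartialSum M f) := by
  simp only [psExp, expPartialSum, coeff_mk, map_sum, coeff_smul]
  refine Finset.sum_subset (Finset.range_subset_range.2 hm) fun r _ hr => ?_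
  rw [coeff_pow_eq_zero_of_lt hf (by simpa using hr), smul_zero]

lemma PowerSeries.coeff_mul_congr_right {B : Type*} [Semiring B] (f : B⟦X⟧) {g h : B⟦X⟧}
    {m : ℕ} (hgh : ∀ b ≤ m, coeff b g = coeff b h) : coeff m (f * g) = coeff m (f * h) := by
  simp only [coeff_mul]
  refine Finset.sum_congr rfl fun ab hab => ?_
  rw [hgh ab.2 (by rw [Finset.HasAntidiagonal.mem_antidiagonal] at hab; omega)]

lemma Derivation.powerSeriesMapCoeffs_psExp {R A : Type*} [CommSemiring R] [CommRing A]
    [Algebra R A] [Algebra ℚ A] (d : Derivation R A A) {f : A⟦X⟧} (hf : constantCoeff f = 0) :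
    d.powerSeriesMapCoeffs (psExp f) = d.powerSeriesMapCoeffs f * psExp f := by
  ext m
  calc coeff m (d.powerSeriesMapCoeffs (psExp f))
      = coeff m (d.powerSeriesMapCoeffs (expPartialSum (m + 2) f)) := by
        rw [coeff_powerSeriesMapCoeffs, coeff_powerSeriesMapCoeffs,
          coeff_psExp_eq_coeff_expPartialSum hf (by omega : m < m + 2)]
    _ = coeff m (d.powerSeriesMapCoeffs f * expPartialSum (m + 1) f) := by
        rw [Derivation.map_expPartialSum_succ]
    _ = coeff m (d.powerSeriesMapCoeffs f * psExp f) :=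
        coeff_mul_congr_right _ fun b hb =>
          (coeff_psExp_eq_coeff_expPartialSum hf (by omega)).symm

lemma List.mul_prod_map_pow {M ι : Type*} [Monoid M] {a : ι → M}
    (ha : ∀ i j, Commute (a i) (a j)) {L : List ι} (hL : L.Nodup) {j : ι} (hj : j ∈ L)
    {e e' : ι → ℕ} (hej : e' j = e j + 1) (he : ∀ i, i ≠ j → e' i = e i) :
    a j * (L.map fun i => a i ^ e i).prod = (L.map fun i => a i ^ e' i).prod := by
  induction L with
  | nil => simp at hj
  | cons i L ih =>
    rw [List.nodup_cons] at hL
    simp only [List.map_cons, List.prod_cons]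
    by_cases hij : i = j
    · subst hij
      have hrest : L.map (fun l => a l ^ e' l) = L.map (fun l => a l ^ e l) :=
        List.map_congr_left fun l hl => by rw [he l (ne_of_mem_of_not_mem hl hL.1)]
      rw [hrest, hej, pow_succ', mul_assoc]
    · have hjL : j ∈ L := (List.mem_cons.1 hj).resolve_left (Ne.symm hij)
      rw [← mul_assoc, ((ha j i).pow_right (e i)).eq, mul_assoc, ih hL.2 hjL, he i hij]

lemma pow_mul_of_mul_eq_mul_add_one {R : Type*} [Ring R] {a y : R} (h : a * y = y * a + 1)
    (m : ℕ) : a ^ m * y = y * a ^ m + m • a ^ (m - 1) := by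
  induction m with
  | zero => simp
  | succ m ih =>
    rw [pow_succ', mul_assoc, ih, mul_add, ← mul_assoc, h, add_mul, one_mul, mul_assoc,
      ← pow_succ', mul_smul_comm, add_assoc, Nat.add_sub_cancel, succ_nsmul' _ m]
    congr 2
    cases m with
    | zero => simp
    | succ m => rw [Nat.add_sub_cancel, ← pow_succ']

lemma List.prod_map_pow_mul {R ι : Type*} [Ring R] {a : ι → R} {y : R} {k : ι}
    (hk : a k * y = y * a k + 1) (hne : ∀ i, i ≠ k → Commute (a i) y) {L : List ι}
    (hL : L.Nodup) (hkL : k ∈ L) {c c' : ι → ℕ} (hck : c' k = c k - 1)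
    (hc : ∀ i, i ≠ k → c' i = c i) :
    (L.map fun i => a i ^ c i).prod * y =
      y * (L.map fun i => a i ^ c i).prod + c k • (L.map fun i => a i ^ c' i).prod := by
  induction L with
  | nil => simp at hkL
  | cons i L ih =>
    rw [List.nodup_cons] at hL
    simp only [List.map_cons, List.prod_cons]
    by_cases hik : i = k
    · subst hik
      have hrest : L.map (fun l => a l ^ c' l) = L.map (fun l => a l ^ c l) :=
        List.map_congr_left fun l hl => by rw [hc l (ne_of_mem_of_not_mem hl hL.1)]
      have hcomm : Commute (L.map fun l => a l ^ c l).prod y :=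
        Commute.list_prod_left _ _ fun z hz => by
          obtain ⟨l, hl, rfl⟩ := List.mem_map.1 hz
          exact (hne l (ne_of_mem_of_not_mem hl hL.1)).pow_left _
      rw [hrest, hck, mul_assoc, hcomm.eq, ← mul_assoc, pow_mul_of_mul_eq_mul_add_one hk,
        add_mul, smul_mul_assoc, mul_assoc]
    · have hkL' : k ∈ L := (List.mem_cons.1 hkL).resolve_left (Ne.symm hik)
      rw [mul_assoc, ih hL.2 hkL', mul_add, ← mul_assoc, ((hne i hik).pow_left _).eq, mul_assoc,
        mul_smul_comm, hc i hik]

namespace IsNormalOrdering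

open MvPolynomial

variable {k : Type*} [Field k] {n : ℕ} {B : Type*} [Ring B] [Algebra k B] {x p : Fin n → B}
  {N : MvPolynomial (Fin n ⊕ Fin n) k →ₗ[k] B}

lemma map_monomial (hN : IsNormalOrdering x p N) (d : (Fin n ⊕ Fin n) →₀ ℕ) (c : k) :
    N (monomial d c) =
      c • (((List.finRange n).map fun i => x i ^ d (Sum.inl i)).prod *
        ((List.finRange n).map fun i => p i ^ d (Sum.inr i)).prod) := by
  rw [← hN d, ← map_smul, smul_monomial, smul_eq_mul, mul_one]

lemma map_one (hN : IsNormalOrdering x p N) : N 1 = 1 := by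
  simpa using hN 0

lemma x_mul_map (hxx : ∀ i j, x i * x j = x j * x i) (hN : IsNormalOrdering x p N) (j : Fin n)
    (f : MvPolynomial (Fin n ⊕ Fin n) k) : x j * N f = N (X (Sum.inl j) * f) := by
  induction f using MvPolynomial.induction_on' with
  | add f g hf hg => rw [map_add, mul_add, hf, hg, mul_add, map_add]
  | monomial d c =>
    have hx := List.mul_prod_map_pow (a := x) (e := fun i => d (Sum.inl i))
      (e' := fun i => (Finsupp.single (Sum.inl j) 1 + d : (Fin n ⊕ Fin n) →₀ ℕ) (Sum.inl i))
      hxx (List.nodup_finRange n) (List.mem_finRange j) (by simp [add_comm])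
      (fun i hi => by simp [Ne.symm hi])
    rw [← pow_one (MvPolynomial.X _), ← monomial_single_add, hN.map_monomial, hN.map_monomial,
      mul_smul_comm, ← mul_assoc, hx]
    simp

lemma map_mul_x (hxx : ∀ i j, x i * x j = x j * x i)
    (hpx : ∀ i j, p i * x j - x j * p i = if i = j then (1 : B) else 0)
    (hN : IsNormalOrdering x p N) (j : Fin n) (f : MvPolynomial (Fin n ⊕ Fin n) k) :
    N f * x j = N (X (Sum.inl j) * f) + N (pderiv (Sum.inr j) f) := by
  induction f using MvPolynomial.induction_on' with
  | add f g hf hg => rw [map_add, add_mul, hf, hg, mul_add, map_add, map_add, map_add]; abel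
  | monomial d c =>
    have hxj : Commute ((List.finRange n).map fun i => x i ^ d (Sum.inl i)).prod (x j) :=
      Commute.list_prod_left _ _ fun z hz => by
        obtain ⟨l, -, rfl⟩ := List.mem_map.1 hz
        exact Commute.pow_left (hxx l j) _
    have hp := List.prod_map_pow_mul (a := p) (y := x j) (c := fun i => d (Sum.inr i))
      (c' := fun i => (d - Finsupp.single (Sum.inr j) 1 : (Fin n ⊕ Fin n) →₀ ℕ) (Sum.inr i))
      (by simpa [sub_eq_iff_eq_add, add_comm] using hpx j j)
      (fun i hi => sub_eq_zero.1 (by simpa [hi] using hpx i j))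
      (List.nodup_finRange n) (List.mem_finRange j) (by simp)
      (fun i hi => by simp [Ne.symm hi])
    rw [← hN.x_mul_map hxx, pderiv_monomial, hN.map_monomial, hN.map_monomial, smul_mul_assoc,
      mul_assoc, hp, mul_add, ← mul_assoc, hxj.eq, mul_assoc, smul_add, mul_smul_comm, mul_smul,
      Nat.cast_smul_eq_nsmul, mul_smul_comm]
    simp

end IsNormalOrdering

lemma coeff_liftFun {R S : Type*} [Semiring R] [Semiring S] (f : R → S) (g : R⟦X⟧) (m : ℕ) :
    coeff m (liftFun f g) = f (coeff m g) :=
  coeff_mk _ _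

section LiftNormalOrdering

variable {k : Type*} [Field k] {n : ℕ} {B : Type*} [Ring B] [Algebra k B] {x p : Fin n → B}
  {N : MvPolynomial (Fin n ⊕ Fin n) k →ₗ[k] B}

lemma liftFun_sum {ι : Type*} (s : Finset ι) (g : ι → (MvPolynomial (Fin n ⊕ Fin n) k)⟦X⟧) :
    liftFun N (∑ i ∈ s, g i) = ∑ i ∈ s, liftFun N (g i) := by
  ext m
  simp [coeff_liftFun]

lemma map_algebraMap_mul_liftFun (u : k⟦X⟧) (g : (MvPolynomial (Fin n ⊕ Fin n) k)⟦X⟧) :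
    map (algebraMap k B) u * liftFun N g = liftFun N (map MvPolynomial.C u * g) := by
  ext m
  rw [coeff_mul, coeff_liftFun, coeff_mul, map_sum]
  refine Finset.sum_congr rfl fun ab _ => ?_
  rw [coeff_liftFun, coeff_map, coeff_map, ← MvPolynomial.smul_eq_C_mul, map_smul,
    Algebra.smul_def]

lemma IsNormalOrdering.C_mul_liftFun (hxx : ∀ i j, x i * x j = x j * x i)
    (hN : IsNormalOrdering x p N) (j : Fin n) (g : (MvPolynomial (Fin n ⊕ Fin n) k)⟦X⟧) :
    C (x j) * liftFun N g = liftFun N (C (MvPolynomial.X (Sum.inl j)) * g) := by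
  ext m
  rw [coeff_C_mul, coeff_liftFun, coeff_liftFun, coeff_C_mul, hN.x_mul_map hxx]

lemma IsNormalOrdering.liftFun_mul_C (hxx : ∀ i j, x i * x j = x j * x i)
    (hpx : ∀ i j, p i * x j - x j * p i = if i = j then (1 : B) else 0)
    (hN : IsNormalOrdering x p N) (j : Fin n) (g : (MvPolynomial (Fin n ⊕ Fin n) k)⟦X⟧) :
    liftFun N g * C (x j) = liftFun N (C (MvPolynomial.X (Sum.inl j)) * g +
      (MvPolynomial.pderiv (Sum.inr j)).powerSeriesMapCoeffs g) := by
  ext m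
  rw [coeff_mul_C, coeff_liftFun, coeff_liftFun, map_add, coeff_C_mul,
    Derivation.coeff_powerSeriesMapCoeffs, hN.map_mul_x hxx hpx, map_add]

end LiftNormalOrdering

section PhiMat

variable {k : Type*} [Field k] {n : ℕ}

def phiExponent (A : Matrix (Fin n) (Fin n) k⟦X⟧) : (MvPolynomial (Fin n ⊕ Fin n) k)⟦X⟧ :=
  ∑ i : Fin n, ∑ j : Fin n,
    C (MvPolynomial.X (Sum.inl i) * MvPolynomial.X (Sum.inr j) :
        MvPolynomial (Fin n ⊕ Fin n) k) * map MvPolynomial.C ((A - 1) i j)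

lemma constantCoeff_phiExponent {A : Matrix (Fin n) (Fin n) k⟦X⟧}
    (hA : A.map constantCoeff = 1) : constantCoeff (phiExponent A) = 0 := by
  have h (i j : Fin n) : coeff 0 ((A - 1) i j) = 0 := by
    rw [coeff_zero_eq_constantCoeff_apply]
    have hij := congrFun₂ hA i j
    rw [Matrix.map_apply] at hij
    rw [Matrix.sub_apply, map_sub, hij, Matrix.one_apply, Matrix.one_apply]
    split_ifs <;> simp
  simp only [phiExponent, map_sum, map_mul, ← coeff_zero_eq_constantCoeff_apply,
    coeff_map, h, map_zero, mul_zero, Finset.sum_const_zero]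

lemma pderiv_powerSeriesMapCoeffs_C_mul_map_C {σ : Type*} (i : σ) (a : MvPolynomial σ k)
    (u : k⟦X⟧) :
    (MvPolynomial.pderiv i).powerSeriesMapCoeffs (C a * map MvPolynomial.C u) =
      C (MvPolynomial.pderiv i a) * map MvPolynomial.C u := by
  refine PowerSeries.ext fun m => ?_
  simp only [Derivation.coeff_powerSeriesMapCoeffs, coeff_C_mul, coeff_map,
    mul_comm _ (MvPolynomial.C _), MvPolynomial.C_mul', Derivation.map_smul]

lemma pderiv_phiExponent (A : Matrix (Fin n) (Fin n) k⟦X⟧) (j : Fin n) :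
    (MvPolynomial.pderiv (Sum.inr j)).powerSeriesMapCoeffs (phiExponent A) =
      ∑ i : Fin n, C (MvPolynomial.X (Sum.inl i)) * map MvPolynomial.C ((A - 1) i j) := by
  simp only [phiExponent, map_sum, pderiv_powerSeriesMapCoeffs_C_mul_map_C,
    MvPolynomial.pderiv_mul, MvPolynomial.pderiv_X, Pi.single_apply, reduceCtorEq, if_false,
    Sum.inr.injEq, mul_ite, mul_one, mul_zero, zero_mul, zero_add, apply_ite C, map_zero, ite_mul,
    Finset.sum_ite_eq', Finset.mem_univ, if_true]

end PhiMat

section PhiMatConjugation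

variable {k : Type*} [Field k] [CharZero k] {n : ℕ} {B : Type*} [Ring B] [Algebra k B]
  {x p : Fin n → B} {N : MvPolynomial (Fin n ⊕ Fin n) k →ₗ[k] B}

lemma IsNormalOrdering.isUnit_phiMat (hN : IsNormalOrdering x p N)
    (A : Matrix (Fin n) (Fin n) k⟦X⟧) : IsUnit (phiMat N A) := by
  rw [isUnit_iff_constantCoeff, ← coeff_zero_eq_constantCoeff_apply, phiMat, coeff_liftFun,
    coeff_zero_eq_constantCoeff_apply, constantCoeff_psExp, hN.map_one]
  exact isUnit_one

lemma IsNormalOrdering.phiMat_mul_C (hxx : ∀ i j, x i * x j = x j * x i)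
    (hpx : ∀ i j, p i * x j - x j * p i = if i = j then (1 : B) else 0)
    (hN : IsNormalOrdering x p N) {A : Matrix (Fin n) (Fin n) k⟦X⟧}
    (hA : A.map constantCoeff = 1) (j : Fin n) :
    phiMat N A * C (x j) = (∑ i, map (algebraMap k B) (A i j) * C (x i)) * phiMat N A := by
  set E := psExp (phiExponent A)
  have hE : phiMat N A = liftFun N E := rfl
  have hdE : (MvPolynomial.pderiv (Sum.inr j)).powerSeriesMapCoeffs E =
      (∑ i, C (MvPolynomial.X (Sum.inl i)) * map MvPolynomial.C ((A - 1) i j)) * E := by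
    rw [Derivation.powerSeriesMapCoeffs_psExp _ (constantCoeff_phiExponent hA),
      pderiv_phiExponent]
  have hone : ∑ i, C (MvPolynomial.X (Sum.inl i)) *
      map MvPolynomial.C ((1 : Matrix (Fin n) (Fin n) k⟦X⟧) i j) =
      C (MvPolynomial.X (Sum.inl j) : MvPolynomial (Fin n ⊕ Fin n) k) := by
    simp [Matrix.one_apply]
  calc phiMat N A * C (x j)
      = liftFun N (C (MvPolynomial.X (Sum.inl j)) * E +
          (MvPolynomial.pderiv (Sum.inr j)).powerSeriesMapCoeffs E) :=
        hN.liftFun_mul_C hxx hpx j E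
    _ = liftFun N (∑ i, map MvPolynomial.C (A i j) * (C (MvPolynomial.X (Sum.inl i)) * E)) := by
        simp only [hdE, Matrix.sub_apply, map_sub, mul_sub, Finset.sum_sub_distrib, hone,
          sub_mul, add_sub_cancel, Finset.sum_mul]
        exact congrArg _ (Finset.sum_congr rfl fun _ _ => by ring)
    _ = (∑ i, map (algebraMap k B) (A i j) * C (x i)) * phiMat N A := by
        simp only [liftFun_sum, ← hN.C_mul_liftFun hxx, ← map_algebraMap_mul_liftFun,
          Finset.sum_mul, mul_assoc, hE]

end PhiMatConjugation

lemma matT_map_constantCoeff : matT.map constantCoeff = 1 := by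
  ext i j
  fin_cases i <;> fin_cases j <;> simp [matT, Tser, constantCoeff_psExp]

theorem statement14_general {B : Type*} [Ring B] [Algebra (RatFunc ℂ) B]
    (x p : Fin 2 → B)
    (hxx : ∀ i j, x i * x j = x j * x i)
    (hpx : ∀ i j, p i * x j - x j * p i = if i = j then (1 : B) else 0)
    (N : MvPolynomial (Fin 2 ⊕ Fin 2) (RatFunc ℂ) →ₗ[RatFunc ℂ] B)
    (hN : IsNormalOrdering x p N)
    (P : B →+* B)
    (hPx : ∀ i, P (x i) = x (Equiv.swap (0 : Fin 2) 1 i))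
    (hPalg : ∀ c : RatFunc ℂ, P (algebraMap (RatFunc ℂ) B c) = algebraMap (RatFunc ℂ) B c) :
    let R₀ : PowerSeries B := phiMat N matT
    let Tw : PowerSeries B := PowerSeries.map (algebraMap (RatFunc ℂ) B) Tser
    ∃ R₀inv : PowerSeries B,
      R₀ * R₀inv = 1 ∧ R₀inv * R₀ = 1 ∧
      PowerSeries.map P (R₀ * PowerSeries.C (x 0) * R₀inv) =
        PowerSeries.C (x 0) - Tw ^ 2 * PowerSeries.C (x 0) + Tw * PowerSeries.C (x 1) ∧
      PowerSeries.map P (R₀ * PowerSeries.C (x 1) * R₀inv) = Tw * PowerSeries.C (x 0) ∧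
      R₀ * PowerSeries.C (x 0) * R₀inv =
        Tw * PowerSeries.C (x 0) + (1 - Tw ^ 2) * PowerSeries.C (x 1) ∧
      R₀ * PowerSeries.C (x 1) * R₀inv = Tw * PowerSeries.C (x 1) := by
  intro R₀ Tw
  obtain ⟨u, hu⟩ := hN.isUnit_phiMat matT
  have hR₀ : R₀ = u := hu.symm
  have hconj (j : Fin 2) :
      R₀ * C (x j) * ↑u⁻¹ = ∑ i, map (algebraMap (RatFunc ℂ) B) (matT i j) * C (x i) := by
    rw [hN.phiMat_mul_C hxx hpx matT_map_constantCoeff, mul_assoc, ← hu, u.mul_inv, mul_one]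
  have h0 : R₀ * C (x 0) * ↑u⁻¹ = Tw * C (x 0) + (1 - Tw ^ 2) * C (x 1) := by
    simp [hconj, Fin.sum_univ_two, matT, Tw]
  have h1 : R₀ * C (x 1) * ↑u⁻¹ = Tw * C (x 1) := by
    simp [hconj, Fin.sum_univ_two, matT, Tw]
  have hPTw : map P Tw = Tw := by
    ext m
    simp [Tw, hPalg]
  have hPx0 : P (x 0) = x 1 := by simp [hPx]
  have hPx1 : P (x 1) = x 0 := by simp [hPx]
  refine ⟨↑u⁻¹, by rw [hR₀, u.mul_inv], by rw [hR₀, u.inv_mul], ?_, ?_, h0, h1⟩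
  · rw [h0]
    simp only [map_add, map_mul, map_sub, map_one, map_pow, hPTw, map_C, hPx0, hPx1]
    noncomm_ring
  · rw [h1, map_mul, hPTw, map_C, hPx1]

/-- with `R₀ = φ([[T, 0], [1 − T², T]])` in `A₂(ℂ(t))[[h]]` and `P` the
algebra automorphism interchanging `(x₁, p₁) ↔ (x₂, p₂)`:
`P(R₀ x₁ R₀⁻¹) = x₁ − T²x₁ + T x₂`, `P(R₀ x₂ R₀⁻¹) = T x₁`; equivalently
`R₀ x₁ R₀⁻¹ = T x₁ + (1 − T²) x₂` and `R₀ x₂ R₀⁻¹ = T x₂`. -/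
theorem statement14 {B : Type*} [Ring B] [Algebra ℚ B] [Algebra (RatFunc ℂ) B]
    (x p : Fin 2 → B)
    (hxx : ∀ i j, x i * x j = x j * x i)
    (hpp : ∀ i j, p i * p j = p j * p i)
    (hpx : ∀ i j, p i * x j - x j * p i = if i = j then (1 : B) else 0)
    (N : MvPolynomial (Fin 2 ⊕ Fin 2) (RatFunc ℂ) →ₗ[RatFunc ℂ] B)
    (hN : IsNormalOrdering x p N)
    (P : B →+* B)
    (hPx : ∀ i, P (x i) = x (Equiv.swap (0 : Fin 2) 1 i))
    (hPp : ∀ i, P (p i) = p (Equiv.swap (0 : Fin 2) 1 i))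
    (hPalg : ∀ c : RatFunc ℂ, P (algebraMap (RatFunc ℂ) B c) = algebraMap (RatFunc ℂ) B c) :
    let R₀ : PowerSeries B := phiMat N matT
    let Tw : PowerSeries B := PowerSeries.map (algebraMap (RatFunc ℂ) B) Tser
    ∃ R₀inv : PowerSeries B,
      R₀ * R₀inv = 1 ∧ R₀inv * R₀ = 1 ∧
      PowerSeries.map P (R₀ * PowerSeries.C (x 0) * R₀inv) =
        PowerSeries.C (x 0) - Tw ^ 2 * PowerSeries.C (x 0) + Tw * PowerSeries.C (x 1) ∧
      PowerSeries.map P (R₀ * PowerSeries.C (x 1) * R₀inv) = Tw * PowerSeries.C (x 0) ∧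
      R₀ * PowerSeries.C (x 0) * R₀inv =
        Tw * PowerSeries.C (x 0) + (1 - Tw ^ 2) * PowerSeries.C (x 1) ∧
      R₀ * PowerSeries.C (x 1) * R₀inv = Tw * PowerSeries.C (x 1) :=
  statement14_general x p hxx hpx N hN P hPx hPalg
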